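/- arXiv:1908.00838 — 2 statements merged into one kernel-verified Lean document; each statement's English description precedes it below -/
import Mathlib

section
/- For any quaternions q_L and q_R with ‖q_L‖ = 1 and ‖q_R‖ = 1, the map x ↦ q_L * x * q_R is a real-linear isometry of ℍ onto itself, and its determinant as a real-linear map on the 4-dimensional real vector space ℍ equals 1 (i.e., it lies in SO(4)). -/
/-!
The norm on `ℍ` is multiplicative, so `x ↦ qL * x * qR` preserves it. In the basis `1, i, j, k`
left multiplication by `q` has determinant `normSq q ^ 2`, and right multiplication by `q` is
conjugate, via quaternion conjugation, to left multiplication by `star q`, which has the same norm.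
Hence the determinant is `normSq qL ^ 2 * normSq qR ^ 2 = 1`.
-/

open Quaternion

namespace Quaternion

variable {R : Type*} [CommRing R]

noncomputable def basisOneIJK : Module.Basis (Fin 4) R ℍ[R] :=
  QuaternionAlgebra.basisOneIJK (-1) 0 (-1)

@[simp]
theorem basisOneIJK_repr (q : ℍ[R]) :
    (basisOneIJK : Module.Basis (Fin 4) R ℍ[R]).repr q = ![q.re, q.imI, q.imJ, q.imK] :=
  rfl

theorem components_basisOneIJK (j : Fin 4) :
    ![(basisOneIJK j : ℍ[R]).re, (basisOneIJK j : ℍ[R]).imI, (basisOneIJK j : ℍ[R]).imJ,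
      (basisOneIJK j : ℍ[R]).imK] = Pi.single j 1 := by
  rw [← basisOneIJK_repr, Module.Basis.repr_self, Finsupp.single_eq_pi_single]

@[simp]
theorem re_basisOneIJK (j : Fin 4) :
    (basisOneIJK j : ℍ[R]).re = Pi.single (M := fun _ => R) j 1 0 :=
  congrFun (components_basisOneIJK j) 0

@[simp]
theorem imI_basisOneIJK (j : Fin 4) :
    (basisOneIJK j : ℍ[R]).imI = Pi.single (M := fun _ => R) j 1 1 :=
  congrFun (components_basisOneIJK j) 1

@[simp]
theorem imJ_basisOneIJK (j : Fin 4) :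
    (basisOneIJK j : ℍ[R]).imJ = Pi.single (M := fun _ => R) j 1 2 :=
  congrFun (components_basisOneIJK j) 2

@[simp]
theorem imK_basisOneIJK (j : Fin 4) :
    (basisOneIJK j : ℍ[R]).imK = Pi.single (M := fun _ => R) j 1 3 :=
  congrFun (components_basisOneIJK j) 3

theorem toMatrix_mulLeft (q : ℍ[R]) :
    LinearMap.toMatrix basisOneIJK basisOneIJK (LinearMap.mulLeft R q) =
      !![q.re, -q.imI, -q.imJ, -q.imK;
         q.imI, q.re, -q.imK, q.imJ;
         q.imJ, q.imK, q.re, -q.imI;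
         q.imK, -q.imJ, q.imI, q.re] := by
  ext i j
  fin_cases i <;> fin_cases j <;> simp [LinearMap.toMatrix_apply]

theorem det_mulLeft (q : ℍ[R]) : LinearMap.det (LinearMap.mulLeft R q) = normSq q ^ 2 := by
  rw [← LinearMap.det_toMatrix basisOneIJK, toMatrix_mulLeft, Matrix.det_succ_row_zero]
  simp [Fin.sum_univ_succ, Matrix.det_fin_three, normSq_def', Fin.succAbove]
  ring

theorem det_mulRight (q : ℍ[R]) : LinearMap.det (LinearMap.mulRight R q) = normSq q ^ 2 := by
  let conj : ℍ[R] ≃ₗ[R] ℍ[R] := { starAddEquiv with map_smul' := star_smul }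
  have mulRight_eq_conj : LinearMap.mulRight R q =
      conj ∘ₗ LinearMap.mulLeft R (star q) ∘ₗ conj.symm := by
    refine LinearMap.ext fun x => ?_
    change x * q = star (star q * star x)
    rw [star_mul, star_star, star_star]
  rw [mulRight_eq_conj, LinearMap.det_conj, det_mulLeft, normSq_star]

end Quaternion

/-- Two-sided multiplication by unit quaternions is a rotation: it is a
real-linear isometry of `ℍ ≅ ℝ⁴` and has determinant 1, i.e. it lies in SO(4). -/
theorem two_sided_quaternion_mul_mem_so4 (qL qR : ℍ[ℝ])
    (hL : ‖qL‖ = 1) (hR : ‖qR‖ = 1) :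
    (∀ x : ℍ[ℝ], ‖qL * x * qR‖ = ‖x‖) ∧
    LinearMap.det
      ((LinearMap.mulRight ℝ qR).comp (LinearMap.mulLeft ℝ qL)) = 1 := by
  have normSq_eq_one {q : ℍ[ℝ]} (hq : ‖q‖ = 1) : normSq q = 1 := by
    rw [normSq_eq_norm_mul_self, hq, one_mul]
  refine ⟨fun x => by rw [norm_mul, norm_mul, hL, hR, one_mul, mul_one], ?_⟩
  rw [LinearMap.det_comp, det_mulRight, det_mulLeft, normSq_eq_one hL, normSq_eq_one hR,
    one_pow, one_mul]
end

section
/- Let A, P ∈ ℍ × ℍ be arbitrary octonions (pairs of real quaternions with the Cayley–Dickson product) and let e₁, …, e₈ be the standard octonion basis. Then the octonions A * (eᵢ * P), for i = 1, …, 8, are pairwise orthogonal with respect to the standard Euclidean inner product on the 8 real coordinates, and each has squared norm N(A * (eᵢ * P)) = N(A) * N(P). Equivalently, the 8×8 real matrix M whose i-th row consists of the 8 real coordinates of A * (eᵢ * P) satisfies M * Mᵀ = (N(A) * N(P)) • (identity matrix), so M is (up to distinctness of entries) a semi-magic square of squares with orthogonal rows and constant N(A) * N(P). -/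
open Quaternion Matrix

/-- The Cayley–Dickson product on `ℍ × ℍ`, modelling the octonions. -/
noncomputable def omul (x y : ℍ[ℝ] × ℍ[ℝ]) : ℍ[ℝ] × ℍ[ℝ] :=
  (x.1 * y.1 - star y.2 * x.2, y.2 * x.1 + x.2 * star y.1)

/-- The octonionic norm on `ℍ × ℍ`. -/
noncomputable def onorm (x : ℍ[ℝ] × ℍ[ℝ]) : ℝ := ‖x.1‖ ^ 2 + ‖x.2‖ ^ 2

/-- The standard octonion basis `e₁, …, e₈` in `ℍ × ℍ`. -/
noncomputable def obasis : Fin 8 → ℍ[ℝ] × ℍ[ℝ]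
  | 0 => (1, 0)
  | 1 => (⟨0, 1, 0, 0⟩, 0)
  | 2 => (⟨0, 0, 1, 0⟩, 0)
  | 3 => (⟨0, 0, 0, 1⟩, 0)
  | 4 => (0, 1)
  | 5 => (0, ⟨0, 1, 0, 0⟩)
  | 6 => (0, ⟨0, 0, 1, 0⟩)
  | 7 => (0, ⟨0, 0, 0, 1⟩)

/-- The eight real coordinates of an octonion in `ℍ × ℍ`. -/
def ocoord (x : ℍ[ℝ] × ℍ[ℝ]) : Fin 8 → ℝ
  | 0 => x.1.re
  | 1 => x.1.imI
  | 2 => x.1.imJ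
  | 3 => x.1.imK
  | 4 => x.2.re
  | 5 => x.2.imI
  | 6 => x.2.imJ
  | 7 => x.2.imK

/-!
`ℍ × ℍ` with the Cayley–Dickson product is a composition algebra, `N (x * y) = N x * N y`: in
`N (x * y)` the cross terms of the two components are `⟪x₁ y₁, ȳ₂ x₂⟫` and `⟪y₂ x₁, x₂ ȳ₁⟫`, and
these agree because `ℍ` is associative and `Re (a b) = Re (b a)`. Hence the additive map
`x ↦ A * (x * P)` multiplies `N` by `N A * N P`, so by polarization it multiplies the coordinate
inner product by the same factor. The rows of `M` are the images of the orthonormal basis `eᵢ`.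
-/

theorem Quaternion.re_mul_comm (a b : ℍ[ℝ]) : (a * b).re = (b * a).re := by
  simp only [re_mul]
  ring

open scoped RealInnerProductSpace in
theorem Quaternion.inner_mul_star_mul (x₁ x₂ y₁ y₂ : ℍ[ℝ]) :
    ⟪x₁ * y₁, star y₂ * x₂⟫ = ⟪y₂ * x₁, x₂ * star y₁⟫ := by
  simp only [inner_def, star_mul, star_star, ← mul_assoc]
  rw [re_mul_comm, ← mul_assoc, ← mul_assoc]

theorem onorm_omul (x y : ℍ[ℝ] × ℍ[ℝ]) : onorm (omul x y) = onorm x * onorm y := by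
  simp only [onorm, omul, norm_sub_sq_real, norm_add_sq_real, norm_mul, norm_star,
    inner_mul_star_mul]
  ring

theorem omul_add (x y z : ℍ[ℝ] × ℍ[ℝ]) : omul x (y + z) = omul x y + omul x z := by
  simp only [omul, Prod.fst_add, Prod.snd_add, star_add, mul_add, add_mul, Prod.mk_add_mk]
  congr 1 <;> abel

theorem add_omul (x y z : ℍ[ℝ] × ℍ[ℝ]) : omul (x + y) z = omul x z + omul y z := by
  simp only [omul, Prod.fst_add, Prod.snd_add, mul_add, add_mul, Prod.mk_add_mk]
  congr 1 <;> abel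

theorem ocoord_add (x y : ℍ[ℝ] × ℍ[ℝ]) : ocoord (x + y) = ocoord x + ocoord y := by
  funext k
  fin_cases k <;> rfl

theorem ocoord_obasis (i : Fin 8) : ocoord (obasis i) = Pi.single i 1 := by
  funext k
  fin_cases i <;> fin_cases k <;> simp [obasis, ocoord]

theorem onorm_eq_sum_ocoord_sq (x : ℍ[ℝ] × ℍ[ℝ]) : onorm x = ∑ k, ocoord x k ^ 2 := by
  simp only [onorm, sq, ← normSq_eq_norm_mul_self, normSq_def', Fin.sum_univ_eight, ocoord]
  ring

theorem two_mul_sum_ocoord_mul (x y : ℍ[ℝ] × ℍ[ℝ]) :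
    2 * ∑ k, ocoord x k * ocoord y k = onorm (x + y) - onorm x - onorm y := by
  simp only [onorm_eq_sum_ocoord_sq, ocoord_add, Pi.add_apply, Finset.mul_sum,
    ← Finset.sum_sub_distrib]
  exact Finset.sum_congr rfl fun k _ => by ring

theorem sum_ocoord_obasis_mul (i j : Fin 8) :
    ∑ k, ocoord (obasis i) k * ocoord (obasis j) k = (1 : Matrix (Fin 8) (Fin 8) ℝ) i j := by
  simp [ocoord_obasis, Pi.single_apply, one_apply, eq_comm]

theorem onorm_obasis (i : Fin 8) : onorm (obasis i) = 1 := by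
  simp only [onorm_eq_sum_ocoord_sq, sq, sum_ocoord_obasis_mul, one_apply_eq]

theorem sum_ocoord_mul_of_onorm_map (L : ℍ[ℝ] × ℍ[ℝ] →+ ℍ[ℝ] × ℍ[ℝ]) {c : ℝ}
    (hL : ∀ x, onorm (L x) = c * onorm x) (x y : ℍ[ℝ] × ℍ[ℝ]) :
    ∑ k, ocoord (L x) k * ocoord (L y) k = c * ∑ k, ocoord x k * ocoord y k := by
  have h := two_mul_sum_ocoord_mul (L x) (L y)
  rw [← map_add, hL, hL, hL] at h
  linear_combination (h - c * two_mul_sum_ocoord_mul x y) / 2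

noncomputable def omulSandwich (A P : ℍ[ℝ] × ℍ[ℝ]) : ℍ[ℝ] × ℍ[ℝ] →+ ℍ[ℝ] × ℍ[ℝ] :=
  AddMonoidHom.mk' (fun x => omul A (omul x P)) fun x y => by rw [add_omul, omul_add]

theorem onorm_omulSandwich (A P x : ℍ[ℝ] × ℍ[ℝ]) :
    onorm (omulSandwich A P x) = onorm A * onorm P * onorm x := by
  simp only [omulSandwich, AddMonoidHom.mk'_apply, onorm_omul]
  ring

/-- The paper's main theorem: the 8×8 matrix whose rows are the coordinates of
`A * (eᵢ * P)` has pairwise orthogonal rows of common squared norm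
`N(A) * N(P)`; i.e. `M * Mᵀ = (N(A) * N(P)) • I`, so `M` is a semi-magic
square of squares with orthogonal rows. -/
theorem octonion_semimagic_rows (A P : ℍ[ℝ] × ℍ[ℝ])
    (M : Matrix (Fin 8) (Fin 8) ℝ)
    (hM : ∀ i j, M i j = ocoord (omul A (omul (obasis i) P)) j) :
    M * Mᵀ = (onorm A * onorm P) • (1 : Matrix (Fin 8) (Fin 8) ℝ) ∧
    (∀ i j : Fin 8, i ≠ j → ∑ k, M i k * M j k = 0) ∧
    (∀ i : Fin 8, ∑ k, (M i k) ^ 2 = onorm A * onorm P) ∧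
    (∀ i : Fin 8, onorm (omul A (omul (obasis i) P)) = onorm A * onorm P) := by
  have rows : ∀ i j,
      ∑ k, M i k * M j k = onorm A * onorm P * (1 : Matrix (Fin 8) (Fin 8) ℝ) i j := by
    intro i j
    simp only [hM]
    rw [← sum_ocoord_obasis_mul]
    exact sum_ocoord_mul_of_onorm_map (omulSandwich A P) (onorm_omulSandwich A P) _ _
  refine ⟨?_, fun i j hij => ?_, fun i => ?_, fun i => ?_⟩
  · ext i j
    simp only [mul_apply, transpose_apply, Matrix.smul_apply, smul_eq_mul, rows]
  · rw [rows, one_apply_ne hij, mul_zero]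
  · simp only [sq, rows, one_apply_eq, mul_one]
  · have h := onorm_omulSandwich A P (obasis i)
    rwa [onorm_obasis, mul_one] at h
end
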